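/- Let C and D be categories with C having pullbacks, and let L ⊣ R be an adjunction with L : C → D and R : D → C. Then for each object c ∈ C there is an induced adjunction between the slice categories C/c and D/L(c), whose left adjoint sends f : x → c to L(f) : L(x) → L(c), and whose right adjoint sends g : y → L(c) to the pullback of R(g) along the unit η_c : c → R(L(c)). -/

import Mathlib

open CategoryTheory CategoryTheory.Limits

/-- Given an adjunction `L ⊣ R` with `L : C → D`, `R : D → C` and `C` having pullbacks,
for each `c : C` there is an induced adjunction between the slice categories `C/c` and
`D/L(c)`: the left adjoint is postcomposition with `L` (sending `f : x → c` to
`L(f) : L(x) → L(c)`), and the right adjoint sends `g : y → L(c)` to the pullback of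
`R(g)` along the unit `η_c : c → R(L(c))`. -/
theorem stmt_6 {C D : Type*} [Category C] [Category D] [HasPullbacks C]
    {L : C ⥤ D} {R : D ⥤ C} (adj : L ⊣ R) (c : C) :
    Nonempty ((Over.post L : Over c ⥤ Over (L.obj c)) ⊣
      (Over.post R ⋙ Over.pullback (adj.unit.app c))) :=
  ⟨Over.postAdjunctionLeft adj⟩
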